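/- arXiv:1607.06960 — 3 statements merged into one kernel-verified Lean document; each statement's English description precedes it below -/
import Mathlib

section
/- Let q ≥ 0, t₀ ∈ ℝ, and let v : [t₀ - q, ∞) → [0,∞) be differentiable on [t₀, ∞) satisfying v'(t) ≤ -α v(t) + β · sup_{s ∈ [t-q, t]} v(s) for all t ≥ t₀, where α > β > 0 are constants. Then v(t) ≤ (sup_{s ∈ [t₀-q, t₀]} v(s)) · exp(-η (t - t₀)) for all t ≥ t₀, where η is the unique positive solution of η = α - β e^{η q}. -/
/-!
Compare `v` with `B t = M e^{-η (t - t₀)} + δ`, where `M` bounds `v` on the initial interval.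
Since `η + β e^{η q} ≤ α`, the exponential part is a supersolution of the delay equation
`w' = -α w + β w(· - q)`, and because `β < α` the constant `δ` makes `v' < B'` strict at any
first contact point `v = B`. A continuous induction therefore keeps `v ≤ B`
for all `t ≥ t₀`, and `δ → 0` gives the claim.
-/

open Set Filter Topology Real

theorem eventually_nhdsGT_lt_of_hasDerivWithinAt_Ici {f B : ℝ → ℝ} {f' B' x : ℝ}
    (hf : HasDerivWithinAt f f' (Ici x) x) (hB : HasDerivWithinAt B B' (Ici x) x)
    (heq : f x = B x) (hlt : f' < B') : ∀ᶠ y in 𝓝[>] x, f y < B y := by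
  have hslope : ∀ᶠ y in 𝓝[>] x, 0 < slope (fun y => B y - f y) x y :=
    (hasDerivWithinAt_iff_tendsto_slope' (lt_irrefl x)).1 (hB.sub hf).Ioi_of_Ici
      (Ioi_mem_nhds (sub_pos.2 hlt))
  filter_upwards [hslope, self_mem_nhdsWithin] with y hy hxy
  rw [slope_def_field, heq, sub_self, sub_zero, div_pos_iff_of_pos_right (sub_pos.2 hxy)] at hy
  exact sub_pos.1 hy

theorem eventually_nhdsGT_le_of_hasDerivWithinAt_Ici {f B : ℝ → ℝ} {f' B' x : ℝ}
    (hf : HasDerivWithinAt f f' (Ici x) x) (hB : HasDerivWithinAt B B' (Ici x) x)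
    (hle : f x ≤ B x) (bound : f x = B x → f' < B') : ∀ᶠ y in 𝓝[>] x, f y ≤ B y := by
  rcases hle.lt_or_eq with hlt | heq
  · have hcont {g : ℝ → ℝ} {g'} (hg : HasDerivWithinAt g g' (Ici x) x) :
        Tendsto g (𝓝[>] x) (𝓝 (g x)) :=
      (hg.continuousWithinAt.mono Ioi_subset_Ici_self).tendsto
    exact ((hcont hf).eventually_lt (hcont hB) hlt).mono fun _ => le_of_lt
  · exact (eventually_nhdsGT_lt_of_hasDerivWithinAt_Ici hf hB heq (bound heq)).mono
      fun _ => le_of_lt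

/-- Unlike in `image_le_of_deriv_right_lt_deriv_boundary'`, the estimate at a contact point may
use the past `f ≤ B` on `[a, x]`, which is what delay inequalities require. -/
theorem image_le_of_deriv_right_lt_deriv_boundary_of_forall_Icc_le {f f' B B' : ℝ → ℝ} {a b : ℝ}
    (hf : ContinuousOn f (Icc a b)) (hf' : ∀ x ∈ Ico a b, HasDerivWithinAt f (f' x) (Ici x) x)
    (ha : f a ≤ B a) (hB : ContinuousOn B (Icc a b))
    (hB' : ∀ x ∈ Ico a b, HasDerivWithinAt B (B' x) (Ici x) x)
    (bound : ∀ x ∈ Ico a b, (∀ y ∈ Icc a x, f y ≤ B y) → f x = B x → f' x < B' x) :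
    ∀ ⦃x⦄, x ∈ Icc a b → f x ≤ B x := by
  have hclosed : IsClosed ({x | f x ≤ B x} ∩ Icc a b) := by
    rw [inter_comm]
    exact (hf.prodMk hB).preimage_isClosed_of_isClosed isClosed_Icc
      OrderClosedTopology.isClosed_le'
  refine hclosed.Icc_subset_of_forall_mem_nhdsGT_of_Icc_subset ha fun x hx hpast => ?_
  exact eventually_nhdsGT_le_of_hasDerivWithinAt_Ici (hf' x hx) (hB' x hx)
    (hpast ⟨hx.1, le_rfl⟩) (bound x hx hpast)

section Halanay

variable {q t₀ α β η M : ℝ} {v v' : ℝ → ℝ}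

theorem halanay_le_mul_exp_add (hq : 0 ≤ q) (hβ : 0 ≤ β) (hαβ : β < α) (hη₀ : 0 ≤ η)
    (hη : η + β * exp (η * q) ≤ α)
    (hv_cont : ContinuousOn v (Ici t₀))
    (hderiv : ∀ t, t₀ ≤ t → HasDerivWithinAt v (v' t) (Ici t) t)
    (hineq : ∀ t, t₀ ≤ t → v' t ≤ -α * v t + β * sSup (v '' Icc (t - q) t))
    (hM₀ : 0 ≤ M) (hM : ∀ s ∈ Icc (t₀ - q) t₀, v s ≤ M) {δ : ℝ} (hδ : 0 < δ) :
    ∀ t, t₀ ≤ t → v t ≤ M * exp (-η * (t - t₀)) + δ := by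
  set B : ℝ → ℝ := fun s => M * exp (-η * (s - t₀)) + δ with hB_def
  have hB' (s : ℝ) : HasDerivAt B (-η * (M * exp (-η * (s - t₀)))) s :=
    ((((hasDerivAt_id s).sub_const t₀).const_mul (-η)).exp.const_mul M).add_const δ
      |>.congr_deriv (by simp only [id]; ring)
  have hB_anti : Antitone B := fun s s' hss' =>
    add_le_add_left (mul_le_mul_of_nonneg_left (exp_le_exp.2 (by nlinarith)) hM₀) δ
  have hinit : ∀ s ∈ Icc (t₀ - q) t₀, v s ≤ B s := fun s hs => by
    have : 1 ≤ exp (-η * (s - t₀)) := one_le_exp (by nlinarith [hs.2])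
    nlinarith [hM s hs]
  intro t ht
  refine image_le_of_deriv_right_lt_deriv_boundary_of_forall_Icc_le
    (hv_cont.mono Icc_subset_Ici_self) (fun x hx => hderiv x hx.1)
    (hinit t₀ ⟨by linarith, le_rfl⟩) (fun x _ => (hB' x).continuousAt.continuousWithinAt)
    (fun x _ => (hB' x).hasDerivWithinAt) (fun x hx hpast hvx => ?_) ⟨ht, le_rfl⟩
  have hwindow : ∀ y ∈ Icc (x - q) x, v y ≤ B y := fun y hy => by
    rcases le_or_gt y t₀ with hyt₀ | hyt₀
    · exact hinit y ⟨by linarith [hy.1, hx.1], hyt₀⟩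
    · exact hpast y ⟨hyt₀.le, hy.2⟩
  have hsup : sSup (v '' Icc (x - q) x) ≤ B (x - q) :=
    csSup_le ((nonempty_Icc.2 (by linarith)).image v) <| by
      rintro _ ⟨y, hy, rfl⟩
      exact (hwindow y hy).trans (hB_anti hy.1)
  have hshift : B (x - q) = exp (η * q) * (M * exp (-η * (x - t₀))) + δ := by
    show M * exp (-η * (x - q - t₀)) + δ = _
    rw [show -η * (x - q - t₀) = η * q + -η * (x - t₀) by ring, exp_add]
    ring
  have hdecay : 0 ≤ M * exp (-η * (x - t₀)) := by positivity
  calc v' x ≤ -α * v x + β * sSup (v '' Icc (x - q) x) := hineq x hx.1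
    _ ≤ -α * B x + β * B (x - q) := by rw [hvx]; gcongr
    _ < -η * (M * exp (-η * (x - t₀))) := by
      rw [hshift]
      simp only [hB_def]
      nlinarith [mul_nonneg (sub_nonneg.2 hη) hdecay]

theorem halanay_le_mul_exp (hq : 0 ≤ q) (hβ : 0 ≤ β) (hαβ : β < α) (hη₀ : 0 ≤ η)
    (hη : η + β * exp (η * q) ≤ α)
    (hv_cont : ContinuousOn v (Ici t₀))
    (hderiv : ∀ t, t₀ ≤ t → HasDerivWithinAt v (v' t) (Ici t) t)
    (hineq : ∀ t, t₀ ≤ t → v' t ≤ -α * v t + β * sSup (v '' Icc (t - q) t))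
    (hM₀ : 0 ≤ M) (hM : ∀ s ∈ Icc (t₀ - q) t₀, v s ≤ M) :
    ∀ t, t₀ ≤ t → v t ≤ M * exp (-η * (t - t₀)) := fun t ht =>
  le_of_forall_pos_le_add fun _ hδ =>
    halanay_le_mul_exp_add hq hβ hαβ hη₀ hη hv_cont hderiv hineq hM₀ hM hδ t ht

end Halanay

/-- Halanay's inequality. -/
theorem halanay_inequality
    (q t₀ α β : ℝ) (hq : 0 ≤ q) (hβ : 0 < β) (hαβ : β < α)
    (v v' : ℝ → ℝ)
    (hv_nonneg : ∀ t, t₀ - q ≤ t → 0 ≤ v t)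
    (hv_cont : ContinuousOn v (Set.Ici (t₀ - q)))
    (hderiv : ∀ t, t₀ ≤ t → HasDerivWithinAt v (v' t) (Set.Ici t) t)
    (hineq : ∀ t, t₀ ≤ t →
      v' t ≤ -α * v t + β * sSup (v '' Set.Icc (t - q) t))
    (η : ℝ) (hη_pos : 0 < η) (hη : η = α - β * Real.exp (η * q)) :
    ∀ t, t₀ ≤ t →
      v t ≤ sSup (v '' Set.Icc (t₀ - q) t₀) * Real.exp (-η * (t - t₀)) := by
  have hbdd : BddAbove (v '' Icc (t₀ - q) t₀) :=
    (isCompact_Icc.image_of_continuousOn (hv_cont.mono Icc_subset_Ici_self)).bddAbove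
  have hM (s : ℝ) (hs : s ∈ Icc (t₀ - q) t₀) : v s ≤ sSup (v '' Icc (t₀ - q) t₀) :=
    le_csSup hbdd (mem_image_of_mem v hs)
  have hM₀ : 0 ≤ sSup (v '' Icc (t₀ - q) t₀) :=
    (hv_nonneg t₀ (by linarith)).trans (hM t₀ ⟨by linarith, le_rfl⟩)
  have hv_cont' : ContinuousOn v (Ici t₀) := hv_cont.mono (Ici_subset_Ici.2 (by linarith))
  exact halanay_le_mul_exp hq hβ.le hαβ hη_pos.le (by linarith) hv_cont' hderiv hineq hM₀ hM
end

section
/- Let σ > K > 0 and q > 0, and let μ : [t₀-q, ∞) → [0,∞) be defined by μ(t) = 1 for t₀-q ≤ t ≤ t₀ and μ(t) = e^{-σ(t-t₀)} + ∫_{t₀}^{t} e^{-σ(t-s)} K (sup_{u∈[s-q,s]} w(u)) ds for t ≥ t₀, where w is continuous, nonnegative, and w(t) ≤ μ(t) for all t ≥ t₀-q. Then μ is differentiable on (t₀,∞) and satisfies μ'(t) ≤ -σ μ(t) + K sup_{u∈[t-q,t]} μ(u) for all t ≥ t₀. -/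
/-!
On `[t₀, ∞)`, `μ` is the variation-of-constants solution of `y' = -σ y + g`, `y(t₀) = 1`, where
`g(s) = K sup_{[s-q,s]} w`; hence `μ' = -σ μ + g` there, and `w ≤ μ` bounds `g(t)` by
`K sup_{[t-q,t]} μ`. Extending `w` to the left of `t₀ - q` by the constant `w (t₀ - q)` makes `g`
continuous on all of `ℝ`, so the derivative comes from the plain fundamental theorem of calculus.
Since `μ t₀ = 1`, `μ` coincides with `μ ∘ max · t₀` on `[t₀ - q, ∞)`, which makes it continuous
there and its windows bounded.
-/

open Set

noncomputable def windowSup (f : ℝ → ℝ) (q s : ℝ) : ℝ :=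
  sSup (f '' Icc (s - q) s)

theorem continuous_windowSup {f : ℝ → ℝ} (hf : Continuous f) (q : ℝ) :
    Continuous (windowSup f q) := by
  have hshift : windowSup f q = fun s => sSup ((fun r => f (s - q + r)) '' Icc 0 q) := by
    ext s
    rw [windowSup, ← image_image f (s - q + ·), image_const_add_Icc, add_zero, sub_add_cancel]
  rw [hshift]
  exact isCompact_Icc.continuous_sSup (by fun_prop)

theorem windowSup_congr {f g : ℝ → ℝ} {q s : ℝ} (h : EqOn f g (Icc (s - q) s)) :
    windowSup f q s = windowSup g q s := by
  rw [windowSup, windowSup, h.image_eq]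

theorem windowSup_mono {f g : ℝ → ℝ} {q s : ℝ} (hq : 0 ≤ q)
    (hfg : ∀ u ∈ Icc (s - q) s, f u ≤ g u) (hg : BddAbove (g '' Icc (s - q) s)) :
    windowSup f q s ≤ windowSup g q s :=
  csSup_le ((nonempty_Icc.2 (by linarith)).image f) <| forall_mem_image.2 fun u hu =>
    (hfg u hu).trans (le_csSup hg (mem_image_of_mem g hu))

theorem hasDerivAt_duhamel {g : ℝ → ℝ} (hg : Continuous g) (σ t₀ t : ℝ) :
    HasDerivAt (fun t => Real.exp (-σ * (t - t₀)) + ∫ s in t₀..t, Real.exp (-σ * (t - s)) * g s)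
      (-σ * (Real.exp (-σ * (t - t₀)) + ∫ s in t₀..t, Real.exp (-σ * (t - s)) * g s) + g t) t := by
  have hfactor : ∀ t, Real.exp (-σ * (t - t₀)) + ∫ s in t₀..t, Real.exp (-σ * (t - s)) * g s
      = Real.exp (-σ * t) * (Real.exp (σ * t₀) + ∫ s in t₀..t, Real.exp (σ * s) * g s) := by
    intro t
    rw [mul_add, ← intervalIntegral.integral_const_mul, ← Real.exp_add]
    congr 1
    · ring_nf
    · refine intervalIntegral.integral_congr fun s _ => ?_
      rw [← mul_assoc, ← Real.exp_add]
      ring_nf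
  have hexp : HasDerivAt (fun t => Real.exp (-σ * t)) (Real.exp (-σ * t) * (-σ)) t := by
    simpa using ((hasDerivAt_id t).const_mul (-σ)).exp
  have hcont : Continuous fun s => Real.exp (σ * s) * g s := by fun_prop
  have hint := ((hcont.integral_hasStrictDerivAt t₀ t).hasDerivAt).const_add (Real.exp (σ * t₀))
  have hinv : Real.exp (-σ * t) * Real.exp (σ * t) = 1 := by
    rw [← Real.exp_add]; ring_nf; exact Real.exp_zero
  simp only [hfactor]
  refine (hexp.mul hint).congr_deriv ?_
  linear_combination g t * hinv

theorem hasDerivWithinAt_of_eq_exp_add_integral_windowSup {σ K q t₀ : ℝ} {w μ : ℝ → ℝ}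
    (hw : ContinuousOn w (Ici (t₀ - q)))
    (hμ : ∀ t, t₀ ≤ t → μ t = Real.exp (-σ * (t - t₀))
        + ∫ s in t₀..t, Real.exp (-σ * (t - s)) * K * windowSup w q s)
    {t : ℝ} (ht : t₀ ≤ t) :
    HasDerivWithinAt μ (-σ * μ t + K * windowSup w q t) (Ici t₀) t := by
  set w' : ℝ → ℝ := fun x => w (max x (t₀ - q))
  have hw' : Continuous w' := hw.comp_continuous (by fun_prop) fun x => le_max_right x (t₀ - q)
  have hW : ∀ s, t₀ ≤ s → windowSup w' q s = windowSup w q s := fun s hs =>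
    windowSup_congr fun u hu => by simp only [w', max_eq_left (show t₀ - q ≤ u by linarith [hu.1])]
  set ψ : ℝ → ℝ := fun t =>
    Real.exp (-σ * (t - t₀)) + ∫ s in t₀..t, Real.exp (-σ * (t - s)) * (K * windowSup w' q s)
  have hμψ : EqOn μ ψ (Ici t₀) := fun t ht => by
    rw [hμ t ht]
    congr 1
    refine intervalIntegral.integral_congr fun s hs => ?_
    rw [uIcc_of_le ht, mem_Icc] at hs
    rw [hW s hs.1, mul_assoc]
  rw [hμψ ht, ← hW t ht]
  exact (hasDerivAt_duhamel ((continuous_windowSup hw' q).const_mul K) σ t₀ t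
    ).hasDerivWithinAt.congr hμψ (hμψ ht)

theorem halanay_majorant_deriv_general
    (σ K q t₀ : ℝ) (hK : 0 < K) (hq : 0 < q)
    (w μ : ℝ → ℝ)
    (hw_cont : ContinuousOn w (Set.Ici (t₀ - q)))
    (hwμ : ∀ t, t₀ - q ≤ t → w t ≤ μ t)
    (hμ1 : ∀ t, t₀ - q ≤ t → t ≤ t₀ → μ t = 1)
    (hμ2 : ∀ t, t₀ ≤ t →
      μ t = Real.exp (-σ * (t - t₀))
        + ∫ s in t₀..t, Real.exp (-σ * (t - s)) * K * sSup (w '' Set.Icc (s - q) s)) :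
    (∀ t ∈ Set.Ioi t₀, DifferentiableAt ℝ μ t) ∧
      ∀ t, t₀ ≤ t →
        derivWithin μ (Set.Ici t₀) t ≤ -σ * μ t + K * sSup (μ '' Set.Icc (t - q) t) := by
  have hderiv := fun t (ht : t₀ ≤ t) =>
    hasDerivWithinAt_of_eq_exp_add_integral_windowSup hw_cont hμ2 ht
  have hμ_max : EqOn μ (fun t => μ (max t t₀)) (Ici (t₀ - q)) := fun t ht => show μ t = μ (max t t₀) by
    rcases le_total t t₀ with h | h
    · rw [max_eq_right h, hμ1 t ht h, hμ1 t₀ (by linarith) le_rfl]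
    · rw [max_eq_left h]
  have hμ_max_cont : Continuous fun t => μ (max t t₀) :=
    ContinuousOn.comp_continuous (fun t ht => (hderiv t ht).continuousWithinAt) (by fun_prop)
      fun t => le_max_right t t₀
  refine ⟨fun t ht => ((hderiv t ht.le).hasDerivAt (Ici_mem_nhds ht)).differentiableAt,
    fun t ht => ?_⟩
  have hbdd : BddAbove (μ '' Icc (t - q) t) := by
    rw [(hμ_max.mono fun u hu => show t₀ - q ≤ u by linarith [hu.1]).image_eq]
    exact (isCompact_Icc.image hμ_max_cont).bddAbove
  rw [(hderiv t ht).derivWithin (uniqueDiffOn_Ici t₀ t ht)]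
  gcongr
  exact windowSup_mono hq.le (fun u hu => hwμ u (by linarith [hu.1])) hbdd

/-- The auxiliary majorant in the proof of the integral Halanay inequality
satisfies the differential Halanay inequality. -/
theorem halanay_majorant_deriv
    (σ K q t₀ : ℝ) (hK : 0 < K) (hσK : K < σ) (hq : 0 < q)
    (w μ : ℝ → ℝ)
    (hw_cont : ContinuousOn w (Set.Ici (t₀ - q)))
    (hw_nonneg : ∀ t, t₀ - q ≤ t → 0 ≤ w t)
    (hwμ : ∀ t, t₀ - q ≤ t → w t ≤ μ t)
    (hμ1 : ∀ t, t₀ - q ≤ t → t ≤ t₀ → μ t = 1)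
    (hμ2 : ∀ t, t₀ ≤ t →
      μ t = Real.exp (-σ * (t - t₀))
        + ∫ s in t₀..t, Real.exp (-σ * (t - s)) * K * sSup (w '' Set.Icc (s - q) s)) :
    (∀ t ∈ Set.Ioi t₀, DifferentiableAt ℝ μ t) ∧
      ∀ t, t₀ ≤ t →
        derivWithin μ (Set.Ici t₀) t ≤ -σ * μ t + K * sSup (μ '' Set.Icc (t - q) t) :=
  halanay_majorant_deriv_general σ K q t₀ hK hq w μ hw_cont hwμ hμ1 hμ2
end

section
/- Let h > 0 and let r : [0,∞) → [0,q] with q ≥ h. Define γ_h(t,r) as above. Then for all t ≥ 0, t - 3q - w_r(q) ≤ γ_h(t, r) ≤ t, where w_r(q) = sup { |r(t₂)-r(t₁)| : 0 ≤ t₁,t₂, |t₂-t₁| ≤ q }. In particular, if t ≥ 3q + w_r(q) then γ_h(t, r) ≥ 0. -/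
/-- The piecewise constant deviated argument -/
noncomputable def gammaPCA (h : ℝ) (r : ℝ → ℝ) (t : ℝ) : ℝ :=
  (⌊t / h - (⌊r ((⌊t / h⌋ : ℝ) * h) / h⌋ : ℝ)⌋ : ℝ) * h

/-! With `i = ⌊t/h⌋` and `k = ⌊r(ih)/h⌋` we have `γ_h(t,r) = (i - k) h`. Since `t - h < ih ≤ t` and
`r(ih) - h < kh ≤ r(ih)`, a value `0 ≤ r(ih) ≤ q` pins `γ_h(t,r)` between `t - h - q` and `t`;
the modulus of continuity is a supremum of absolute values, hence nonnegative. -/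

section GammaPCA

variable {h : ℝ} {r : ℝ → ℝ} {t : ℝ}

theorem gammaPCA_eq (h : ℝ) (r : ℝ → ℝ) (t : ℝ) :
    gammaPCA h r t = (⌊t / h⌋ - ⌊r (⌊t / h⌋ * h) / h⌋ : ℝ) * h := by
  rw [gammaPCA, Int.floor_sub_intCast]
  push_cast
  rfl

theorem gammaPCA_le_self (hh : 0 < h) (hr : 0 ≤ r (⌊t / h⌋ * h)) : gammaPCA h r t ≤ t := by
  have hgrid := Int.sub_floor_div_mul_nonneg t hh
  have hk : 0 ≤ (⌊r (⌊t / h⌋ * h) / h⌋ : ℝ) * h :=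
    mul_nonneg (mod_cast Int.floor_nonneg.mpr (div_nonneg hr hh.le)) hh.le
  rw [gammaPCA_eq, sub_mul]
  linarith

theorem sub_sub_lt_gammaPCA {q : ℝ} (hh : 0 < h) (hr : r (⌊t / h⌋ * h) ≤ q) :
    t - h - q < gammaPCA h r t := by
  have hgrid := Int.sub_floor_div_mul_lt t hh
  have hk := Int.sub_floor_div_mul_nonneg (r (⌊t / h⌋ * h)) hh
  rw [gammaPCA_eq, sub_mul]
  linarith

end GammaPCA

/-- t - 3q - w_r(q) ≤ γ_h(t,r) ≤ t for all t ≥ 0; in particular γ_h(t,r) ≥ 0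
for t ≥ 3q + w_r(q). -/
theorem gammaPCA_bounds
    (h q : ℝ) (hh : 0 < h) (hhq : h ≤ q) (r : ℝ → ℝ)
    (hr : ∀ t, 0 ≤ t → r t ∈ Set.Icc 0 q) :
    ∀ t, 0 ≤ t →
      (t - 3 * q - sSup {d : ℝ | ∃ t₁ t₂ : ℝ, 0 ≤ t₁ ∧ 0 ≤ t₂ ∧
          |t₂ - t₁| ≤ q ∧ d = |r t₂ - r t₁|} ≤ gammaPCA h r t
        ∧ gammaPCA h r t ≤ t)
      ∧ (3 * q + sSup {d : ℝ | ∃ t₁ t₂ : ℝ, 0 ≤ t₁ ∧ 0 ≤ t₂ ∧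
          |t₂ - t₁| ≤ q ∧ d = |r t₂ - r t₁|} ≤ t → 0 ≤ gammaPCA h r t) := by
  intro t ht
  have hgrid : 0 ≤ (⌊t / h⌋ : ℝ) * h :=
    mul_nonneg (mod_cast Int.floor_nonneg.mpr (div_nonneg ht hh.le)) hh.le
  obtain ⟨hr₀, hrq⟩ := hr _ hgrid
  have hw : 0 ≤ sSup {d : ℝ | ∃ t₁ t₂ : ℝ, 0 ≤ t₁ ∧ 0 ≤ t₂ ∧ |t₂ - t₁| ≤ q ∧ d = |r t₂ - r t₁|} :=
    Real.sSup_nonneg <| by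
      rintro d ⟨t₁, t₂, -, -, -, rfl⟩
      exact abs_nonneg _
  have hlower := sub_sub_lt_gammaPCA hh hrq
  exact ⟨⟨by linarith, gammaPCA_le_self hh hr₀⟩, fun _ => by linarith⟩
end
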